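/- arXiv:1611.06401 — 5 statements merged into one kernel-verified Lean document; each statement's English description precedes it below -/
import Mathlib

section
/- Let 0 < k < n, S = {2n−k, ..., 2n−1}, and T ⊆ S with |T| = i. Define U_T = {v ∈ V(O_n) : v ∩ S = T} and W_T = {w ∈ V(O_n) : w ∩ S = S − T}. Then in O_n(S), every vertex of W_T has degree n−i, every vertex of U_T has degree n−k+i, no two vertices of U_T are adjacent, no two vertices of W_T are adjacent, and every neighbor in O_n(S) of a vertex of W_T lies in U_T. Hence U_T ∪ W_T induces an (n−i, n−k+i)-biregular subgraph of O_n(S). -/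
/-!
An edge `{u, v}` of `O_n` survives in `O_n(S)` iff `S ⊆ u ∪ v`, so the traces `u ∩ S` and `v ∩ S`
of its ends are complementary in `S`.  Hence, for `S ≠ ∅`, no two vertices with the same trace
are adjacent, and the neighbours of a vertex with trace `S \ T` have trace `T`.  A neighbour of
`v` is `vᶜ` minus one element `a`, and it survives iff `a ∉ S`, so `v` has degree
`#(vᶜ \ S) = n - #(S \ v)`.
-/

open Finset

/-- The Kneser graph: vertices are the `k`-element subsets of `[n]`,
adjacent iff disjoint. -/
def kneser (n k : ℕ) : SimpleGraph {s : Finset (Fin n) // s.card = k} where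
  Adj u v := u ≠ v ∧ Disjoint (u : Finset (Fin n)) (v : Finset (Fin n))
  symm := by
    constructor
    intro u v h
    exact ⟨Ne.symm h.1, h.2.symm⟩
  loopless := by
    constructor
    intro u h
    exact h.1 rfl

instance kneserDec (n k : ℕ) : DecidableRel (kneser n k).Adj :=
  fun u v => inferInstanceAs (Decidable (u ≠ v ∧ Disjoint (u : Finset (Fin n)) (v : Finset (Fin n))))

/-- The bipartite Kneser graph: vertices are the `k` and `(n-k)`-element subsets of `[n]`,
adjacent iff one is a proper subset of the other. -/
def bipKneser (n k : ℕ) : SimpleGraph {s : Finset (Fin n) // s.card = k ∨ s.card = n - k} where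
  Adj u v := (u : Finset (Fin n)) ⊂ (v : Finset (Fin n)) ∨ (v : Finset (Fin n)) ⊂ (u : Finset (Fin n))
  symm := by
    constructor
    intro u v h
    exact h.symm
  loopless := by
    constructor
    intro u h
    cases h with
    | inl h => exact ssubset_irrefl _ h
    | inr h => exact ssubset_irrefl _ h

instance bipKneserDec (n k : ℕ) : DecidableRel (bipKneser n k).Adj :=
  fun u v => inferInstanceAs (Decidable (_ ∨ _))

/-- The middle levels graph `B_n` is the bipartite Kneser graph `B_{2n-1, n-1}`. -/
def middleLevels (n : ℕ) := bipKneser (2 * n - 1) (n - 1)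

/-- The odd graph `O_n` is the Kneser graph `K_{2n-1, n-1}`. -/
def oddGraph (n : ℕ) := kneser (2 * n - 1) (n - 1)

instance oddGraphDec (n : ℕ) : DecidableRel (oddGraph n).Adj := kneserDec _ _

/-- `O_n(S)`: the odd graph with every edge whose label lies in `S` deleted.  The label of an
edge `(u,v)` is the unique element of `[2n−1] − (u ∪ v)`, so an edge survives iff the
complement of `u ∪ v` is disjoint from `S`. -/
def oddGraphDel (n : ℕ) (S : Finset (Fin (2 * n - 1))) :
    SimpleGraph {s : Finset (Fin (2 * n - 1)) // s.card = n - 1} where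
  Adj u v := (oddGraph n).Adj u v ∧
    Disjoint ((u : Finset (Fin (2 * n - 1))) ∪ (v : Finset (Fin (2 * n - 1))))ᶜ S
  symm := by
    constructor
    intro u v h
    refine ⟨h.1.symm, ?_⟩
    rw [Finset.union_comm]
    exact h.2
  loopless := by
    constructor
    intro u h
    exact (oddGraph n).loopless.irrefl u h.1

instance oddGraphDelDec (n : ℕ) (S : Finset (Fin (2 * n - 1))) :
    DecidableRel (oddGraphDel n S).Adj :=
  fun u v => inferInstanceAs (Decidable ((oddGraph n).Adj u v ∧ _))

/-- The set `S = {2n−k, ..., 2n−1}` of the last `k` colors (as elements of `Fin (2n−1)`,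
which we index from 0, these are the elements with value at least `2n−1−k`). -/
def lastColors (n k : ℕ) : Finset (Fin (2 * n - 1)) :=
  Finset.univ.filter (fun x => 2 * n - 1 - k ≤ x.val)

namespace oddGraphDel

variable {n : ℕ} {S : Finset (Fin (2 * n - 1))}
  {u v : {s : Finset (Fin (2 * n - 1)) // s.card = n - 1}}

theorem adj_iff (hn : 2 ≤ n) :
    (oddGraphDel n S).Adj v u ↔ Disjoint v.1 u.1 ∧ S ⊆ v.1 ∪ u.1 := by
  refine ⟨fun h => ⟨h.1.2, disjoint_compl_left_iff.mp h.2⟩, fun ⟨hdisj, hS⟩ => ?_⟩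
  refine ⟨⟨?_, hdisj⟩, disjoint_compl_left_iff.mpr hS⟩
  rintro rfl
  have hv : #v.1 = n - 1 := v.2
  rw [disjoint_self.mp hdisj, bot_eq_empty, card_empty] at hv
  omega

theorem inter_eq_sdiff_inter_of_adj (h : (oddGraphDel n S).Adj v u) :
    u.1 ∩ S = S \ (v.1 ∩ S) := by
  have hdisj : Disjoint v.1 u.1 := h.1.2
  have hS : S ⊆ v.1 ∪ u.1 := disjoint_compl_left_iff.mp h.2
  ext x
  have hx := @hS x
  have hxvu : x ∈ v.1 → x ∉ u.1 := fun h => disjoint_left.mp hdisj h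
  simp only [mem_inter, mem_sdiff, mem_union] at hx hxvu ⊢
  tauto

theorem not_adj_of_inter_eq (hS : S.Nonempty) (h : v.1 ∩ S = u.1 ∩ S) :
    ¬ (oddGraphDel n S).Adj v u := by
  intro hadj
  obtain ⟨x, hx⟩ := hS
  have hx' := congrArg (x ∈ ·) (inter_eq_sdiff_inter_of_adj hadj)
  simp only [← h, mem_inter, mem_sdiff] at hx'
  tauto

theorem degree_eq (hn : 2 ≤ n) : (oddGraphDel n S).degree v = n - #(S \ v.1) := by
  have hvc : #v.1ᶜ = n := by
    rw [card_compl, Fintype.card_fin, v.2]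
    omega
  have hbij : #(v.1ᶜ \ S) = #((oddGraphDel n S).neighborFinset v) := by
    refine card_bij (fun a ha => ⟨v.1ᶜ.erase a, ?_⟩) (fun a ha => ?_)
      (fun a ha b _ h => (erase_inj _ (mem_sdiff.mp ha).1).mp (congrArg Subtype.val h))
      (fun u hu => ?_)
    · rw [card_erase_of_mem (mem_sdiff.mp ha).1, hvc]
    · obtain ⟨hav, haS⟩ := mem_sdiff.mp ha
      rw [SimpleGraph.mem_neighborFinset, adj_iff hn]
      refine ⟨disjoint_compl_right.mono_right (erase_subset a _), fun x hx => ?_⟩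
      by_cases hxv : x ∈ v.1
      · exact mem_union_left _ hxv
      · exact mem_union_right _ (mem_erase.mpr ⟨fun h => haS (h ▸ hx), mem_compl.mpr hxv⟩)
    · rw [SimpleGraph.mem_neighborFinset, adj_iff hn] at hu
      obtain ⟨hdisj, hS⟩ := hu
      have hsub : u.1 ⊆ v.1ᶜ := le_compl_iff_disjoint_left.mpr hdisj
      obtain ⟨a, hau, hins⟩ := exists_eq_insert_iff.mpr ⟨hsub, by rw [u.2, hvc]; omega⟩
      have hav : a ∈ v.1ᶜ := hins ▸ mem_insert_self a u.1
      have haS : a ∉ S := fun h => (mem_union.mp (hS h)).elim (mem_compl.mp hav) hau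
      refine ⟨a, mem_sdiff.mpr ⟨hav, haS⟩, Subtype.ext ?_⟩
      exact (congrArg (erase · a) hins).symm.trans (erase_insert hau)
  have hsplit := card_sdiff_add_card_inter v.1ᶜ S
  rw [inter_comm, ← sdiff_eq_inter_compl, hvc] at hsplit
  rw [SimpleGraph.degree, ← hbij]
  omega

end oddGraphDel

theorem card_lastColors {n k : ℕ} (hk : k ≤ 2 * n - 1) : #(lastColors n k) = k := by
  have hlt := Fin.card_filter_val_lt (n := 2 * n - 1) (m := 2 * n - 1 - k)
  have hsplit := card_filter_add_card_filter_not (s := univ)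
    (fun x : Fin (2 * n - 1) => x.val < 2 * n - 1 - k)
  simp only [not_lt, card_univ, Fintype.card_fin] at hsplit
  rw [lastColors]
  omega

/-- Let `0 < k < n`, `S = {2n−k,...,2n−1}` and `T ⊆ S` with `|T| = i`.
With `U_T = {v : v ∩ S = T}` and `W_T = {w : w ∩ S = S − T}`, in `O_n(S)` every vertex of
`W_T` has degree `n−i`, every vertex of `U_T` has degree `n−k+i`, no two vertices of `U_T`
are adjacent, no two vertices of `W_T` are adjacent, and every neighbour of a vertex of
`W_T` lies in `U_T`; hence `U_T ∪ W_T` induces an `(n−i, n−k+i)`-biregular subgraph. -/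
theorem biregular_components (n k i : ℕ) (hk : 0 < k) (hkn : k < n)
    (T : Finset (Fin (2 * n - 1))) (hTS : T ⊆ lastColors n k) (hTi : T.card = i) :
    (∀ w : {s : Finset (Fin (2 * n - 1)) // s.card = n - 1},
      (w : Finset (Fin (2 * n - 1))) ∩ lastColors n k = lastColors n k \ T →
      (oddGraphDel n (lastColors n k)).degree w = n - i) ∧
    (∀ u : {s : Finset (Fin (2 * n - 1)) // s.card = n - 1},
      (u : Finset (Fin (2 * n - 1))) ∩ lastColors n k = T →
      (oddGraphDel n (lastColors n k)).degree u = n - k + i) ∧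
    (∀ u v : {s : Finset (Fin (2 * n - 1)) // s.card = n - 1},
      (u : Finset (Fin (2 * n - 1))) ∩ lastColors n k = T →
      (v : Finset (Fin (2 * n - 1))) ∩ lastColors n k = T →
      ¬ (oddGraphDel n (lastColors n k)).Adj u v) ∧
    (∀ w x : {s : Finset (Fin (2 * n - 1)) // s.card = n - 1},
      (w : Finset (Fin (2 * n - 1))) ∩ lastColors n k = lastColors n k \ T →
      (x : Finset (Fin (2 * n - 1))) ∩ lastColors n k = lastColors n k \ T →
      ¬ (oddGraphDel n (lastColors n k)).Adj w x) ∧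
    (∀ w u : {s : Finset (Fin (2 * n - 1)) // s.card = n - 1},
      (w : Finset (Fin (2 * n - 1))) ∩ lastColors n k = lastColors n k \ T →
      (oddGraphDel n (lastColors n k)).Adj w u →
      (u : Finset (Fin (2 * n - 1))) ∩ lastColors n k = T) := by
  have hn : 2 ≤ n := by omega
  have hS : #(lastColors n k) = k := card_lastColors (by omega)
  have hSne : (lastColors n k).Nonempty := card_pos.mp (hS.symm ▸ hk)
  have hST : lastColors n k \ (lastColors n k \ T) = T := Finset.sdiff_sdiff_eq_self hTS
  refine ⟨fun w hw => ?_, fun u hu => ?_,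
    fun u v hu hv => oddGraphDel.not_adj_of_inter_eq hSne (hu.trans hv.symm),
    fun w x hw hx => oddGraphDel.not_adj_of_inter_eq hSne (hw.trans hx.symm),
    fun w u hw hadj => by rw [oddGraphDel.inter_eq_sdiff_inter_of_adj hadj, hw, hST]⟩
  · rw [oddGraphDel.degree_eq hn, ← sdiff_inter_self_right, hw, hST, hTi]
  · have hik : i ≤ k := hTi ▸ hS ▸ card_le_card hTS
    rw [oddGraphDel.degree_eq hn, ← sdiff_inter_self_right, hu, card_sdiff_of_subset hTS, hS, hTi]
    omega
end

section
/- Let S = {2n−k,...,2n−1}, T_1, T_2 ⊆ S distinct with |T_1| = |T_2| = i and T_1 ≠ S − T_2. Then there is no path in O_n(S) from any vertex of U_{T_1} ∪ W_{T_1} to any vertex of U_{T_2} ∪ W_{T_2}; i.e., the induced subgraphs on these vertex sets lie in different connected components of O_n(S). -/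
open Finset

/-!
An edge `uv` of `O_n(S)` has its label outside `S`, so `S ⊆ u ∪ v`; together with `u ∩ v = ∅`
this forces `v ∩ S = S − (u ∩ S)`. Hence along any path of `O_n(S)` the trace `x ∩ S` only
alternates between a set and its complement in `S`, and the pair `{T, S − T}` is an invariant
of connected components.
-/

theorem inter_eq_sdiff_of_disjoint_of_subset_union {α : Type*} [DecidableEq α]
    {u v S : Finset α} (huv : Disjoint u v) (hS : S ⊆ u ∪ v) : v ∩ S = S \ u := by
  ext x
  have hx : x ∈ u → x ∉ v := fun hxu => disjoint_left.mp huv hxu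
  have hxS : x ∈ S → x ∈ u ∪ v := fun hxS => hS hxS
  simp only [mem_inter, mem_sdiff, mem_union] at hxS ⊢
  tauto

namespace oddGraphDel

variable {n : ℕ} {S : Finset (Fin (2 * n - 1))}

theorem inter_eq_sdiff_of_adj {u v : {s : Finset (Fin (2 * n - 1)) // s.card = n - 1}}
    (h : (oddGraphDel n S).Adj u v) : (v : Finset (Fin (2 * n - 1))) ∩ S = S \ u :=
  inter_eq_sdiff_of_disjoint_of_subset_union h.1.2 (disjoint_compl_left_iff.mp h.2)

theorem inter_eq_or_eq_sdiff_of_reachable {T : Finset (Fin (2 * n - 1))} (hT : T ⊆ S)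
    {u v : {s : Finset (Fin (2 * n - 1)) // s.card = n - 1}} (huv : (oddGraphDel n S).Reachable u v)
    (hu : (u : Finset (Fin (2 * n - 1))) ∩ S = T ∨ (u : Finset (Fin (2 * n - 1))) ∩ S = S \ T) :
    (v : Finset (Fin (2 * n - 1))) ∩ S = T ∨ (v : Finset (Fin (2 * n - 1))) ∩ S = S \ T := by
  obtain ⟨p⟩ := huv
  induction p with
  | nil => exact hu
  | cons hux _ ih =>
    apply ih
    rw [inter_eq_sdiff_of_adj hux, ← sdiff_inter_self_right]
    rcases hu with hu | hu <;> rw [hu]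
    · exact Or.inr rfl
    · exact Or.inl (Finset.sdiff_sdiff_eq_self hT)

end oddGraphDel

theorem vertex_sets_disconnected_general (n k : ℕ)
    (T₁ T₂ : Finset (Fin (2 * n - 1)))
    (hT₁ : T₁ ⊆ lastColors n k) (hT₂ : T₂ ⊆ lastColors n k)
    (hne : T₁ ≠ T₂)
    (hne' : T₁ ≠ lastColors n k \ T₂)
    (v w : {s : Finset (Fin (2 * n - 1)) // s.card = n - 1})
    (hv : (v : Finset (Fin (2 * n - 1))) ∩ lastColors n k = T₁ ∨
          (v : Finset (Fin (2 * n - 1))) ∩ lastColors n k = lastColors n k \ T₁)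
    (hw : (w : Finset (Fin (2 * n - 1))) ∩ lastColors n k = T₂ ∨
          (w : Finset (Fin (2 * n - 1))) ∩ lastColors n k = lastColors n k \ T₂) :
    ¬ (oddGraphDel n (lastColors n k)).Reachable v w := by
  intro hvw
  have hw₁ := oddGraphDel.inter_eq_or_eq_sdiff_of_reachable hT₁ hvw hv
  rcases hw with hw | hw <;> rcases hw₁ with h | h <;> rw [hw] at h
  · exact hne h.symm
  · exact hne' (by rw [h, Finset.sdiff_sdiff_eq_self hT₁])
  · exact hne' h.symm
  · exact hne (by rw [← Finset.sdiff_sdiff_eq_self hT₁, ← h, Finset.sdiff_sdiff_eq_self hT₂])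

/-- Let `S = {2n−k,...,2n−1}`, and `T₁, T₂ ⊆ S` distinct with
`|T₁| = |T₂| = i` and `T₁ ≠ S − T₂`.  Then no vertex of `U_{T₁} ∪ W_{T₁}` is reachable in
`O_n(S)` from any vertex of `U_{T₂} ∪ W_{T₂}`: the induced subgraphs lie in different
connected components of `O_n(S)`. -/
theorem vertex_sets_disconnected (n k i : ℕ) (hk : 0 < k) (hkn : k < n)
    (T₁ T₂ : Finset (Fin (2 * n - 1)))
    (hT₁ : T₁ ⊆ lastColors n k) (hT₂ : T₂ ⊆ lastColors n k)
    (hc₁ : T₁.card = i) (hc₂ : T₂.card = i) (hne : T₁ ≠ T₂)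
    (hne' : T₁ ≠ lastColors n k \ T₂)
    (v w : {s : Finset (Fin (2 * n - 1)) // s.card = n - 1})
    (hv : (v : Finset (Fin (2 * n - 1))) ∩ lastColors n k = T₁ ∨
          (v : Finset (Fin (2 * n - 1))) ∩ lastColors n k = lastColors n k \ T₁)
    (hw : (w : Finset (Fin (2 * n - 1))) ∩ lastColors n k = T₂ ∨
          (w : Finset (Fin (2 * n - 1))) ∩ lastColors n k = lastColors n k \ T₂) :
    ¬ (oddGraphDel n (lastColors n k)).Reachable v w :=
  vertex_sets_disconnected_general n k T₁ T₂ hT₁ hT₂ hne hne' v w hv hw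
end

section
/- Let v and w be distinct vertices of the odd graph O_n and let a ≠ b be elements of [2n−1]. Then w = (a,b)·v (image of v under the transposition swapping a and b) if and only if there is a path of length two from v to w in O_n whose two edges carry labels a and b (in one of the two orders). -/
open Finset

/-!
An edge of `O_n` labelled `c` at `v` leads to the complement of `v ∪ {c}`, so a path
`v –a– x –b– w` exists exactly when `a ∉ v`, `b ∉ w` and `v ∪ {a} = w ∪ {b}`; for `a ≠ b` this
says that `b ∈ v` and `w` is `v` with `b` replaced by `a`, i.e. `w = (a b)·v`. Conversely,
`(a b)·v ≠ v` forces exactly one of `a, b` to lie in `v`, which fixes the order of the labels.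
-/

namespace Finset

variable {α : Type*} [DecidableEq α]

theorem mem_image_swap {s : Finset α} {a b c : α} :
    c ∈ s.image (Equiv.swap a b) ↔ Equiv.swap a b c ∈ s := by
  simp [Equiv.swap_apply_eq_iff]

theorem image_swap_of_mem_iff_mem {s : Finset α} {a b : α} (h : a ∈ s ↔ b ∈ s) :
    s.image (Equiv.swap a b) = s := by
  ext c
  rw [mem_image_swap, Equiv.swap_apply_def]
  split_ifs with hca hcb
  · rw [hca, h]
  · rw [hcb, h]
  · rfl

theorem image_swap_of_mem_of_notMem {s : Finset α} {i j : α} (hi : i ∈ s) (hj : j ∉ s) :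
    s.image (Equiv.swap i j) = (insert j s).erase i :=
  coe_injective <| by
    push_cast
    exact Equiv.image_swap_of_mem_of_notMem hi hj

theorem insert_eq_insert_iff_image_swap {s t : Finset α} {a b : α} (hab : a ≠ b)
    (ha : a ∉ s) (hb : b ∉ t) :
    insert a s = insert b t ↔ b ∈ s ∧ t = s.image (Equiv.swap a b) := by
  rw [Equiv.swap_comm]
  constructor
  · intro h
    have hbs : b ∈ s := by
      have : b ∈ insert a s := h ▸ mem_insert_self b t
      exact (mem_insert.1 this).resolve_left hab.symm
    refine ⟨hbs, ?_⟩
    rw [image_swap_of_mem_of_notMem hbs ha, h, erase_insert hb]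
  · rintro ⟨hbs, rfl⟩
    rw [image_swap_of_mem_of_notMem hbs ha, insert_erase (mem_insert_of_mem hbs)]

theorem compl_union_eq_singleton_iff [Fintype α] {s t : Finset α} {a : α} (h : Disjoint s t) :
    (s ∪ t)ᶜ = {a} ↔ a ∉ s ∧ t = (insert a s)ᶜ := by
  have hst := disjoint_left.1 h
  simp only [Finset.ext_iff, mem_compl, mem_union, mem_insert, mem_singleton]
  grind

end Finset

open Finset

namespace oddGraph

variable {n : ℕ}

theorem adj_of_disjoint {u x : {s : Finset (Fin (2 * n - 1)) // s.card = n - 1}}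
    {c : Fin (2 * n - 1)} (hc : c ∈ u.1) (h : Disjoint u.1 x.1) : (oddGraph n).Adj u x :=
  ⟨fun hux => disjoint_left.1 h hc (hux ▸ hc), h⟩

theorem card_compl_insert {v : {s : Finset (Fin (2 * n - 1)) // s.card = n - 1}}
    {c : Fin (2 * n - 1)} (hc : c ∉ v.1) : (insert c v.1)ᶜ.card = n - 1 := by
  rw [card_compl, card_insert_of_notMem hc, v.2, Fintype.card_fin]
  omega

theorem exists_two_path_labels_iff {v w : {s : Finset (Fin (2 * n - 1)) // s.card = n - 1}}
    {a b : Fin (2 * n - 1)} (hab : a ≠ b) :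
    (∃ x : {s : Finset (Fin (2 * n - 1)) // s.card = n - 1},
      (oddGraph n).Adj v x ∧ (oddGraph n).Adj x w ∧
        (v.1 ∪ x.1)ᶜ = {a} ∧ (x.1 ∪ w.1)ᶜ = {b}) ↔
      a ∉ v.1 ∧ b ∈ v.1 ∧ w.1 = v.1.image (Equiv.swap a b) := by
  constructor
  · rintro ⟨x, ⟨-, hvx⟩, ⟨-, hxw⟩, hva, hwb⟩
    rw [compl_union_eq_singleton_iff hvx] at hva
    rw [union_comm, compl_union_eq_singleton_iff hxw.symm] at hwb
    have hins : insert a v.1 = insert b w.1 := compl_injective (hva.2.symm.trans hwb.2)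
    exact ⟨hva.1, (insert_eq_insert_iff_image_swap hab hva.1 hwb.1).1 hins⟩
  · rintro ⟨ha, hb, hw⟩
    have haw : a ∈ w.1 := by rw [hw, mem_image_swap, Equiv.swap_apply_left]; exact hb
    have hbw : b ∉ w.1 := by rw [hw, mem_image_swap, Equiv.swap_apply_right]; exact ha
    have hins := (insert_eq_insert_iff_image_swap hab ha hbw).2 ⟨hb, hw⟩
    let x : {s : Finset (Fin (2 * n - 1)) // s.card = n - 1} :=
      ⟨(insert a v.1)ᶜ, card_compl_insert ha⟩
    have hvx : Disjoint v.1 x.1 := disjoint_compl_right.mono_left (subset_insert a v.1)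
    have hwx : Disjoint w.1 x.1 := by
      rw [show x.1 = (insert b w.1)ᶜ from congrArg compl hins]
      exact disjoint_compl_right.mono_left (subset_insert b w.1)
    refine ⟨x, adj_of_disjoint hb hvx, (adj_of_disjoint haw hwx).symm, ?_, ?_⟩
    · exact (compl_union_eq_singleton_iff hvx).2 ⟨ha, rfl⟩
    · rw [union_comm]
      exact (compl_union_eq_singleton_iff hwx).2 ⟨hbw, congrArg compl hins⟩

end oddGraph

theorem transposition_iff_two_path_general (n : ℕ)
    (v w : {s : Finset (Fin (2 * n - 1)) // s.card = n - 1}) (hvw : v ≠ w)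
    (a b : Fin (2 * n - 1)) (hab : a ≠ b) :
    (w : Finset (Fin (2 * n - 1))) = (v : Finset (Fin (2 * n - 1))).image (Equiv.swap a b) ↔
    ∃ x : {s : Finset (Fin (2 * n - 1)) // s.card = n - 1},
      (oddGraph n).Adj v x ∧ (oddGraph n).Adj x w ∧
      ((((v : Finset (Fin (2 * n - 1))) ∪ (x : Finset (Fin (2 * n - 1))))ᶜ = {a} ∧
        ((x : Finset (Fin (2 * n - 1))) ∪ (w : Finset (Fin (2 * n - 1))))ᶜ = {b}) ∨
       (((v : Finset (Fin (2 * n - 1))) ∪ (x : Finset (Fin (2 * n - 1))))ᶜ = {b} ∧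
        ((x : Finset (Fin (2 * n - 1))) ∪ (w : Finset (Fin (2 * n - 1))))ᶜ = {a})) := by
  simp only [and_or_left, exists_or, oddGraph.exists_two_path_labels_iff hab,
    oddGraph.exists_two_path_labels_iff hab.symm, Equiv.swap_comm b a]
  constructor
  · intro hw
    have hmem : ¬(a ∈ v.1 ↔ b ∈ v.1) := fun h =>
      hvw (Subtype.ext (hw.trans (image_swap_of_mem_iff_mem h)).symm)
    tauto
  · rintro (⟨-, -, hw⟩ | ⟨-, -, hw⟩) <;> exact hw

/-- **Biggs.** For distinct vertices `v, w` of the odd graph `O_n` and distinct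
`a, b ∈ [2n−1]`, we have `w = (a,b)·v` iff there is a path of length two from `v` to `w`
whose edges carry the labels `a` and `b` in one of the two orders. -/
theorem transposition_iff_two_path (n : ℕ) (hn : 1 ≤ n)
    (v w : {s : Finset (Fin (2 * n - 1)) // s.card = n - 1}) (hvw : v ≠ w)
    (a b : Fin (2 * n - 1)) (hab : a ≠ b) :
    (w : Finset (Fin (2 * n - 1))) = (v : Finset (Fin (2 * n - 1))).image (Equiv.swap a b) ↔
    ∃ x : {s : Finset (Fin (2 * n - 1)) // s.card = n - 1},
      (oddGraph n).Adj v x ∧ (oddGraph n).Adj x w ∧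
      ((((v : Finset (Fin (2 * n - 1))) ∪ (x : Finset (Fin (2 * n - 1))))ᶜ = {a} ∧
        ((x : Finset (Fin (2 * n - 1))) ∪ (w : Finset (Fin (2 * n - 1))))ᶜ = {b}) ∨
       (((v : Finset (Fin (2 * n - 1))) ∪ (x : Finset (Fin (2 * n - 1))))ᶜ = {b} ∧
        ((x : Finset (Fin (2 * n - 1))) ∪ (w : Finset (Fin (2 * n - 1))))ᶜ = {a})) :=
  transposition_iff_two_path_general n v w hvw a b hab
end

section
/- For vertices v, w of the odd graph O_n, the graph distance satisfies: d(v,w) = 2r if and only if |v ∩ w| = n − 1 − r, and d(v,w) = 2r+1 if and only if |v ∩ w| = r. Consequently the diameter of O_n is n − 1. -/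
open Finset

/-!
Fix `w` and let `t = |v ∩ w|`. Two adjacent vertices `u, v` cover all but one of the `2n - 1`
points, so `|u ∩ w| + |v ∩ w|` is `n - 1` or `n - 2`; hence `min (2 (n - 1 - t)) (2 t + 1)`
changes by at most one along an edge and is a lower bound for `d(v, w)`. Conversely every
`v ≠ w` has a neighbour `vᶜ \ {x}` on which this quantity drops: take `x ∈ w \ v` when the
even term is the minimum and `x ∉ v ∪ w` otherwise.
-/

namespace SimpleGraph

variable {V : Type*} {G : SimpleGraph V} {f : V → ℕ}

lemma Walk.le_length_add_of_adj {u v : V} (hf : ∀ a b, G.Adj a b → f a ≤ f b + 1)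
    (p : G.Walk u v) : f u ≤ p.length + f v := by
  induction p with
  | nil => simp
  | cons h p ih =>
    have := hf _ _ h
    rw [Walk.length_cons]
    omega

lemma exists_walk_length_le_of_exists_adj_lt {w : V} (hf : ∀ v ≠ w, ∃ u, G.Adj v u ∧ f u < f v)
    (v : V) : ∃ p : G.Walk v w, p.length ≤ f v := by
  induction hv : f v using Nat.strong_induction_on generalizing v with
  | _ d ih =>
    by_cases hvw : v = w
    · subst hvw
      exact ⟨.nil, by simp⟩
    obtain ⟨u, hvu, hlt⟩ := hf v hvw
    obtain ⟨p, hp⟩ := ih (f u) (hv ▸ hlt) u rfl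
    exact ⟨.cons hvu p, by rw [Walk.length_cons]; omega⟩

lemma dist_eq_of_adj_le_of_exists_adj_lt {w : V} (hw : f w = 0)
    (hlip : ∀ a b, G.Adj a b → f a ≤ f b + 1) (hdesc : ∀ v ≠ w, ∃ u, G.Adj v u ∧ f u < f v)
    (v : V) : G.dist v w = f v := by
  obtain ⟨p, hp⟩ := exists_walk_length_le_of_exists_adj_lt hdesc v
  obtain ⟨q, hq⟩ := Reachable.exists_walk_length_eq_dist ⟨p⟩
  have := q.le_length_add_of_adj hlip
  have := dist_le p
  omega

end SimpleGraph

lemma Finset.exists_card_eq_card_eq_card_inter_eq {α : Type*} [Fintype α] [DecidableEq α]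
    {k t : ℕ} (htk : t ≤ k) (hk : 2 * k ≤ Fintype.card α + t) :
    ∃ v w : Finset α, #v = k ∧ #w = k ∧ #(v ∩ w) = t := by
  obtain ⟨v, -, hv⟩ :=
    exists_subset_card_eq (s := (univ : Finset α)) (n := k) (by rw [card_univ]; omega)
  obtain ⟨A, hAv, hA⟩ := exists_subset_card_eq (s := v) (n := t) (by omega)
  obtain ⟨B, hBv, hB⟩ := exists_subset_card_eq (s := vᶜ) (n := k - t) (by rw [card_compl]; omega)
  have hvB : Disjoint v B := subset_compl_iff_disjoint_left.mp hBv
  have hvw : v ∩ (A ∪ B) = A := by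
    rw [inter_union_distrib_left, inter_eq_right.mpr hAv, disjoint_iff_inter_eq_empty.mp hvB,
      union_empty]
  refine ⟨v, A ∪ B, hv, ?_, by rw [hvw, hA]⟩
  rw [card_union_of_disjoint (hvB.mono_left hAv)]
  omega

/-- The distance in the odd graph `O_{k+1}` between two vertices meeting in `t` points. -/
def oddDist (k t : ℕ) : ℕ :=
  min (2 * (k - t)) (2 * t + 1)

section Kneser

variable {m k : ℕ}

lemma kneser_card_inter_le (v : {s : Finset (Fin m) // #s = k}) (w : Finset (Fin m)) :
    #(v.1 ∩ w) ≤ k :=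
  (card_le_card inter_subset_left).trans_eq v.2

lemma kneser_card_inter_add_card_inter (hm : m = 2 * k + 1)
    {u v : {s : Finset (Fin m) // #s = k}} (huv : (kneser m k).Adj u v)
    (w : {s : Finset (Fin m) // #s = k}) :
    #(u.1 ∩ w.1) + #(v.1 ∩ w.1) ≤ k ∧ k ≤ #(u.1 ∩ w.1) + #(v.1 ∩ w.1) + 1 := by
  obtain ⟨-, hdisj⟩ := huv
  have hsum : #(u.1 ∩ w.1) + #(v.1 ∩ w.1) = #(w.1 ∩ (u.1 ∪ v.1)) := by
    rw [inter_comm w.1, union_inter_distrib_right,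
      card_union_of_disjoint (hdisj.mono inter_subset_left inter_subset_left)]
  have hout : #(w.1 \ (u.1 ∪ v.1)) ≤ 1 := by
    calc #(w.1 \ (u.1 ∪ v.1)) ≤ #(u.1 ∪ v.1)ᶜ := card_le_card fun x hx => by
          simpa using (mem_sdiff.mp hx).2
      _ = 1 := by rw [card_compl, card_union_of_disjoint hdisj, u.2, v.2, Fintype.card_fin]; omega
  have hsplit := card_inter_add_card_sdiff w.1 (u.1 ∪ v.1)
  rw [w.2] at hsplit
  have := kneser_card_inter_le w (u.1 ∪ v.1)
  omega

lemma kneser_exists_adj_compl_erase (hm : m = 2 * k + 1) (hk : 0 < k)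
    (v : {s : Finset (Fin m) // #s = k}) {x : Fin m} (hx : x ∉ v.1) :
    ∃ u, (kneser m k).Adj v u ∧ u.1 = v.1ᶜ.erase x := by
  have hcard : #(v.1ᶜ.erase x) = k := by
    rw [card_erase_of_mem (mem_compl.mpr hx), card_compl, v.2, Fintype.card_fin]
    omega
  have hdisj : Disjoint v.1 (v.1ᶜ.erase x) := disjoint_compl_right.mono_right (erase_subset _ _)
  refine ⟨⟨_, hcard⟩, ⟨fun h => ?_, hdisj⟩, rfl⟩
  have h' : v.1 = v.1ᶜ.erase x := congrArg Subtype.val h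
  rw [← h', disjoint_self, bot_eq_empty, ← card_eq_zero, v.2] at hdisj
  omega

lemma kneser_exists_adj_oddDist_lt (hm : m = 2 * k + 1) {v w : {s : Finset (Fin m) // #s = k}}
    (hvw : v ≠ w) :
    ∃ u, (kneser m k).Adj v u ∧ oddDist k #(u.1 ∩ w.1) < oddDist k #(v.1 ∩ w.1) := by
  set t := #(v.1 ∩ w.1)
  have htk : t < k := by
    refine (kneser_card_inter_le v w.1).lt_of_ne fun htk => hvw (Subtype.ext ?_)
    have hv : v.1 ∩ w.1 = v.1 := eq_of_subset_of_card_le inter_subset_left (by rw [v.2]; omega)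
    exact eq_of_subset_of_card_le (hv ▸ inter_subset_right) (by rw [v.2, w.2])
  have hwv : #(w.1 \ v.1) = k - t := by rw [card_sdiff, w.2]
  have huw : ∀ u : {s : Finset (Fin m) // #s = k}, ∀ x, u.1 = v.1ᶜ.erase x →
      u.1 ∩ w.1 = (w.1 \ v.1).erase x := fun u x hu => by
    rw [hu, erase_inter, inter_comm, ← sdiff_eq_inter_compl]
  by_cases hmin : k - t ≤ t
  · obtain ⟨x, hx⟩ : (w.1 \ v.1).Nonempty := by rw [← card_pos, hwv]; omega
    obtain ⟨u, hvu, hu⟩ := kneser_exists_adj_compl_erase hm (by omega) v (mem_sdiff.mp hx).2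
    refine ⟨u, hvu, ?_⟩
    rw [huw u x hu, card_erase_of_mem hx, hwv]
    simp only [oddDist]
    omega
  · obtain ⟨x, hx⟩ : (v.1 ∪ w.1)ᶜ.Nonempty := by
      rw [← card_pos, card_compl, Fintype.card_fin, card_union, v.2, w.2]
      omega
    have hx' : x ∉ v.1 ∧ x ∉ w.1 := by simpa using hx
    obtain ⟨u, hvu, hu⟩ := kneser_exists_adj_compl_erase hm (by omega) v hx'.1
    refine ⟨u, hvu, ?_⟩
    rw [huw u x hu, erase_eq_of_notMem fun h => hx'.2 (mem_sdiff.mp h).1, hwv]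
    simp only [oddDist]
    omega

theorem kneser_dist_eq_oddDist (hm : m = 2 * k + 1) (v w : {s : Finset (Fin m) // #s = k}) :
    (kneser m k).dist v w = oddDist k #(v.1 ∩ w.1) := by
  refine SimpleGraph.dist_eq_of_adj_le_of_exists_adj_lt (f := fun u => oddDist k #(u.1 ∩ w.1))
    (by simp [oddDist, w.2]) (fun a b hab => ?_)
    (fun v hvw => kneser_exists_adj_oddDist_lt hm hvw) v
  have := kneser_card_inter_add_card_inter hm hab w
  simp only [oddDist]
  omega

end Kneser

/-- **Biggs.** In the odd graph `O_n`, `d(v,w) = 2r` iff `|v ∩ w| = n−1−r`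
(for `2r ≤ n−1`) and `d(v,w) = 2r+1` iff `|v ∩ w| = r` (for `2r+1 ≤ n−1`).  Consequently
the diameter of `O_n` is `n−1`. -/
theorem oddGraph_dist (n : ℕ) (hn : 1 ≤ n) :
    (∀ (v w : {s : Finset (Fin (2 * n - 1)) // s.card = n - 1}) (r : ℕ),
      (2 * r ≤ n - 1 →
        ((oddGraph n).dist v w = 2 * r ↔
          ((v : Finset (Fin (2 * n - 1))) ∩ (w : Finset (Fin (2 * n - 1)))).card = n - 1 - r)) ∧
      (2 * r + 1 ≤ n - 1 →
        ((oddGraph n).dist v w = 2 * r + 1 ↔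
          ((v : Finset (Fin (2 * n - 1))) ∩ (w : Finset (Fin (2 * n - 1)))).card = r))) ∧
    (∀ v w : {s : Finset (Fin (2 * n - 1)) // s.card = n - 1}, (oddGraph n).dist v w ≤ n - 1) ∧
    (∃ v w : {s : Finset (Fin (2 * n - 1)) // s.card = n - 1}, (oddGraph n).dist v w = n - 1) := by
  have hdist (v w : {s : Finset (Fin (2 * n - 1)) // s.card = n - 1}) :
      (oddGraph n).dist v w = oddDist (n - 1) #(v.1 ∩ w.1) ∧ #(v.1 ∩ w.1) ≤ n - 1 :=
    ⟨kneser_dist_eq_oddDist (by omega) v w, kneser_card_inter_le v w.1⟩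
  simp only [oddDist] at hdist
  refine ⟨fun v w r => ?_, fun v w => ?_, ?_⟩
  · have := hdist v w
    omega
  · have := hdist v w
    omega
  · -- vertices meeting in `(n - 1) / 2` points are at distance `n - 1`
    obtain ⟨v, w, hv, hw, hvw⟩ :=
      exists_card_eq_card_eq_card_inter_eq (α := Fin (2 * n - 1)) (k := n - 1) (t := (n - 1) / 2)
        (by omega) (by rw [Fintype.card_fin]; omega)
    have := hdist ⟨v, hv⟩ ⟨w, hw⟩
    exact ⟨⟨v, hv⟩, ⟨w, hw⟩, by rw [this.1, hvw]; omega⟩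
end

section
/- Suppose n ≥ 4 and a 3-regular subgraph of the odd graph O_n is obtained by deleting an independent set of vertices that is a union of k orbits under the cyclic permutation (1,2,...,2n−1), each orbit having 2n−1 vertices, each deleted vertex having degree n. Then counting edges forces k = (4/(2n−4))·binom(2n−4, n). Equivalently, (n−3)/((2n−1)(2n−3)) · binom(2n−1, n−1) = (4/(2n−4))·binom(2n−4, n). -/
/-!
Solving the edge count for `k` gives `k = (n - 3) / ((2n - 1)(2n - 3)) · C(2n - 1, n - 1)`, so
everything reduces to the binomial identity. Writing `n = m + 4`, it follows by climbing from
`C(2m + 4, m)` to `C(2m + 7, m + 3)` with `(a + 1) C(a, b) = C(a + 1, b + 1) (b + 1)` three times.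
-/

theorem choose_two_mul_add_seven_mul (m : ℕ) :
    (m + 1) * (2 * m + 4) * (2 * m + 7).choose (m + 3) =
      4 * (2 * m + 7) * (2 * m + 5) * (2 * m + 4).choose m := by
  have h5 : ((2 * m + 5 : ℕ) : ℤ) * (2 * m + 4).choose m =
      (2 * m + 5).choose (m + 1) * (m + 1) := by
    exact_mod_cast Nat.add_one_mul_choose_eq (2 * m + 4) m
  have h6 : ((2 * m + 6 : ℕ) : ℤ) * (2 * m + 5).choose (m + 1) =
      (2 * m + 6).choose (m + 2) * (m + 2) := by
    exact_mod_cast Nat.add_one_mul_choose_eq (2 * m + 5) (m + 1)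
  have h7 : ((2 * m + 7 : ℕ) : ℤ) * (2 * m + 6).choose (m + 2) =
      (2 * m + 7).choose (m + 3) * (m + 3) := by
    exact_mod_cast Nat.add_one_mul_choose_eq (2 * m + 6) (m + 2)
  refine Nat.eq_of_mul_eq_mul_left (show 0 < (m + 2) * (m + 3) by positivity) ?_
  zify
  push_cast at h5 h6 h7
  linear_combination (-((m : ℤ) + 2) * (m + 1) * (2 * m + 4)) * h7
    - (m + 1) * (2 * m + 4) * (2 * m + 7) * h6 - (2 * m + 4) * (2 * m + 7) * (2 * m + 6) * h5

theorem fourth_catalan_convolution_eq (n : ℕ) (hn : 4 ≤ n) :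
    ((n : ℚ) - 3) / ((2 * n - 1) * (2 * n - 3)) * (Nat.choose (2 * n - 1) (n - 1) : ℚ) =
      (4 / (2 * (n : ℚ) - 4)) * (Nat.choose (2 * n - 4) n : ℚ) := by
  obtain ⟨m, rfl⟩ := Nat.exists_eq_add_of_le' hn
  have key : ((m + 1) * (2 * m + 4) * (2 * m + 7).choose (m + 3) : ℚ) =
      4 * (2 * m + 7) * (2 * m + 5) * (2 * m + 4).choose m := by
    exact_mod_cast choose_two_mul_add_seven_mul m
  rw [show 2 * (m + 4) - 1 = 2 * m + 7 by omega, show m + 4 - 1 = m + 3 by omega,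
    show 2 * (m + 4) - 4 = m + 4 + m by omega, Nat.choose_symm_add,
    show m + 4 + m = 2 * m + 4 by omega]
  have hm : (0 : ℚ) ≤ m := m.cast_nonneg
  rw [div_mul_eq_mul_div, div_mul_eq_mul_div,
    div_eq_div_iff (by push_cast; nlinarith) (by push_cast; linarith)]
  push_cast
  linear_combination key

theorem eq_of_three_halves_edge_count {K : Type*} [Field K] [CharZero K] {n V k : K}
    (h1 : 2 * n - 1 ≠ 0) (h3 : 2 * n - 3 ≠ 0)
    (h : 3 / 2 * (V - k * (2 * n - 1)) = n / 2 * V - n * k * (2 * n - 1)) :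
    k = (n - 3) / ((2 * n - 1) * (2 * n - 3)) * V := by
  rw [div_mul_eq_mul_div, eq_div_iff (mul_ne_zero h1 h3)]
  linear_combination 2 * h

/-- Suppose `n ≥ 4` and a 3-regular subgraph of the odd graph `O_n` is
obtained by deleting an independent set which is a union of `k` orbits under the cyclic
permutation `(1,...,2n−1)` (so `(2n−1)k` vertices, each of degree `n`, are removed together
with `n(2n−1)k` edges).  Counting edges (the remaining graph has `C(2n−1,n−1) − k(2n−1)`
vertices, hence `(3/2)(C(2n−1,n−1) − k(2n−1))` edges, while `O_n` has `(n/2)·C(2n−1,n−1)`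
edges), this forces `k = (4/(2n−4))·C(2n−4, n)`, the fourth convolution of the Catalan
numbers; equivalently `((n−3)/((2n−1)(2n−3)))·C(2n−1,n−1) = (4/(2n−4))·C(2n−4,n)`. -/
theorem fourth_catalan_convolution (n : ℕ) (hn : 4 ≤ n) :
    (∀ k : ℚ,
      (3 / 2) * ((Nat.choose (2 * n - 1) (n - 1) : ℚ) - k * (2 * n - 1)) =
        (n / 2) * (Nat.choose (2 * n - 1) (n - 1) : ℚ) - n * k * (2 * n - 1) →
      k = (4 / (2 * (n : ℚ) - 4)) * (Nat.choose (2 * n - 4) n : ℚ)) ∧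
    (((n : ℚ) - 3) / ((2 * n - 1) * (2 * n - 3)) * (Nat.choose (2 * n - 1) (n - 1) : ℚ) =
      (4 / (2 * (n : ℚ) - 4)) * (Nat.choose (2 * n - 4) n : ℚ)) := by
  have hn' : (4 : ℚ) ≤ n := by exact_mod_cast hn
  refine ⟨fun k hk => ?_, fourth_catalan_convolution_eq n hn⟩
  rw [← fourth_catalan_convolution_eq n hn]
  exact eq_of_three_halves_edge_count (by linarith) (by linarith) hk
end
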